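/- Let Λ_0, Λ_1, Λ_2, … be a sequence of complex numbers, and let A, σ, V and U be as defined in the context. Then for all integers k ≥ j ≥ 0 one has ∑_{l=j}^{k} U(k,l)·V(l,j) = δ_{k,j} and ∑_{l=j}^{k} V(k,l)·U(l,j) = δ_{k,j}, where δ_{k,j} is Kronecker's delta (equal to 1 if k = j and 0 otherwise). -/

import Mathlib

/-!
Write `σ_k(x) = ∏_{i<k} (1 + Λ_i x) = ∑_m σ_{k-1,m} x^m` and `a_j(x) = ∑_m A(j,m) x^m`, so that
`(1 - (j+1) x) a_{j+1} = a_j` and `V(k,j)` is the coefficient of `x^k` in `x^j σ_k a_j`.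
Multiplying by `1 + Λ_k x` and by `1 - (j+1) x` gives
`V(k+1,j) = (Λ_k + j) V(k,j) + V(k,j-1)`, a recurrence of the same shape as the one defining `U`.
Together they show that `S = UV` satisfies `S(k+1,j) = (j - k) S(k,j) + S(k,j-1)`, and the factor
`j - k` kills the diagonal term, so `S = I` by induction on `k`. Both matrices are lower
triangular, so this holds for their `N × N` truncations, where a left inverse is a right inverse:
hence `VU = I` as well.
-/

/-- The shifted double sequence `besselA' (j+1) (m+1) = A(j, m)`, where
`A(-1,0) = 1`, `A(-1,m) = 0` for `m ≥ 1`, `A(j,-1) = 0` for `j ≥ 0`, and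
`A(j,m) = j·A(j,m-1) + A(j-1,m)` for `j, m ≥ 0`. -/
def besselA' : ℕ → ℕ → ℤ
  | 0, 0 => 0
  | 0, 1 => 1
  | 0, _ + 2 => 0
  | _ + 1, 0 => 0
  | j + 1, m + 1 => (j : ℤ) * besselA' (j + 1) m + besselA' j (m + 1)
termination_by j m => (j, m)

/-- `besselA j m = A(j, m)` for `j, m ≥ 0`. -/
def besselA (j m : ℕ) : ℤ := besselA' (j + 1) (m + 1)

/-- `sigmaE Λ k m = σ_{k-1,m}`, the elementary symmetric polynomial of degree `m`
in `Λ_0, …, Λ_{k-1}`. -/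
noncomputable def sigmaE (Λ : ℕ → ℂ) (k m : ℕ) : ℂ :=
  ∑ t ∈ Finset.powersetCard m (Finset.range k), ∏ i ∈ t, Λ i

/-- `Vcoef Λ k j = V(k,j) = ∑_{m=0}^{k-j} A(j, k-j-m)·σ_{k-1,m}` for `0 ≤ j ≤ k`,
and `V(k,j) = 0` for `j > k` or `j < 0`. -/
noncomputable def Vcoef (Λ : ℕ → ℂ) (k : ℕ) (j : ℤ) : ℂ :=
  if j < 0 ∨ (k : ℤ) < j then 0
  else ∑ m ∈ Finset.range (k - j.toNat + 1),
    (besselA j.toNat (k - j.toNat - m) : ℂ) * sigmaE Λ k m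

/-- The shifted double sequence `Ucoef' Λ (k+1) (j+1) = U(k,j)`, where
`U(-1,-1) = 1`, `U(k,-1) = U(-1,j) = 0` for `k, j ≥ 0`, and
`U(k,j) = -(Λ_j + k - 1)·U(k-1,j) + U(k-1,j-1)` for `k, j ≥ 0`. -/
noncomputable def Ucoef' (Λ : ℕ → ℂ) : ℕ → ℕ → ℂ
  | 0, 0 => 1
  | 0, _ + 1 => 0
  | _ + 1, 0 => 0
  | k + 1, j + 1 => -(Λ j + (k : ℂ) - 1) * Ucoef' Λ k (j + 1) + Ucoef' Λ k j

/-- `Ucoef Λ k j = U(k,j)` for `k, j ≥ 0`. -/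
noncomputable def Ucoef (Λ : ℕ → ℂ) (k j : ℕ) : ℂ := Ucoef' Λ (k + 1) (j + 1)

open Finset PowerSeries

lemma besselA_zero_right (j : ℕ) : besselA j 0 = 1 := by
  induction j with
  | zero => simp [besselA, besselA']
  | succ j ih => simpa [besselA, besselA'] using ih

lemma besselA_zero_left_succ (m : ℕ) : besselA 0 (m + 1) = 0 := by
  simp [besselA, besselA']

lemma besselA_succ_succ (j m : ℕ) :
    besselA (j + 1) (m + 1) = (j + 1) * besselA (j + 1) m + besselA j (m + 1) := by
  rw [besselA, besselA']
  push_cast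
  rfl

lemma sigmaE_eq_esymm (Λ : ℕ → ℂ) (k m : ℕ) :
    sigmaE Λ k m = ((range k).val.map Λ).esymm m :=
  (Finset.esymm_map_val Λ _ m).symm

lemma sigmaE_zero (Λ : ℕ → ℂ) (k : ℕ) : sigmaE Λ k 0 = 1 := by
  simp [sigmaE]

lemma sigmaE_succ_succ (Λ : ℕ → ℂ) (k m : ℕ) :
    sigmaE Λ (k + 1) (m + 1) = sigmaE Λ k (m + 1) + Λ k * sigmaE Λ k m := by
  simp [sigmaE_eq_esymm, range_add_one, Multiset.esymm, Multiset.powersetCard_cons,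
    Multiset.map_map, Multiset.sum_map_mul_left]

lemma sigmaE_eq_zero (Λ : ℕ → ℂ) {k m : ℕ} (h : k < m) : sigmaE Λ k m = 0 := by
  rw [sigmaE, powersetCard_eq_empty.2 (by simpa using h), sum_empty]

noncomputable def besselSeries (j : ℕ) : ℂ⟦X⟧ := mk fun m => (besselA j m : ℂ)

noncomputable def sigmaSeries (Λ : ℕ → ℂ) (k : ℕ) : ℂ⟦X⟧ := mk (sigmaE Λ k)

lemma besselSeries_zero : besselSeries 0 = 1 := by
  ext (_ | m) <;> simp [besselSeries, besselA_zero_right, besselA_zero_left_succ, coeff_one]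

lemma besselSeries_succ (j : ℕ) :
    besselSeries (j + 1) = X * (C ((j : ℂ) + 1) * besselSeries (j + 1)) + besselSeries j := by
  ext (_ | m)
  · simp [besselSeries, besselA_zero_right]
  · rw [map_add, coeff_succ_X_mul, coeff_C_mul]
    simp [besselSeries, besselA_succ_succ]

lemma sigmaSeries_succ (Λ : ℕ → ℂ) (k : ℕ) :
    sigmaSeries Λ (k + 1) = sigmaSeries Λ k + X * (C (Λ k) * sigmaSeries Λ k) := by
  ext (_ | m)
  · simp [sigmaSeries, sigmaE_zero]
  · simp [sigmaSeries, sigmaE_succ_succ, coeff_succ_X_mul, coeff_C_mul]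

noncomputable def vSeries (Λ : ℕ → ℂ) (k j : ℕ) : ℂ⟦X⟧ :=
  X ^ j * (sigmaSeries Λ k * besselSeries j)

-- The factor `X ^ j` makes `Vnat Λ k j` vanish for `k < j`, as `V(k,j)` does.
noncomputable def Vnat (Λ : ℕ → ℂ) (k j : ℕ) : ℂ := coeff k (vSeries Λ k j)

lemma Vcoef_natCast (Λ : ℕ → ℂ) (k j : ℕ) : Vcoef Λ k j = Vnat Λ k j := by
  rw [Vnat, vSeries, coeff_X_pow_mul', Vcoef]
  by_cases h : j ≤ k
  · rw [if_neg (by omega), if_pos h, Int.toNat_natCast, coeff_mul,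
      Nat.sum_antidiagonal_eq_sum_range_succ
        (fun a b => coeff a (sigmaSeries Λ k) * coeff b (besselSeries j))]
    simp [sigmaSeries, besselSeries, mul_comm]
  · rw [if_pos (by omega), if_neg h]

lemma Vnat_eq_zero (Λ : ℕ → ℂ) {k j : ℕ} (h : k < j) : Vnat Λ k j = 0 := by
  rw [Vnat, vSeries, coeff_X_pow_mul', if_neg (by omega)]

lemma Vnat_zero_left (Λ : ℕ → ℂ) (j : ℕ) : Vnat Λ 0 j = if j = 0 then 1 else 0 := by
  rcases j with _ | j
  · simp [Vnat, vSeries, sigmaSeries, besselSeries, sigmaE_zero, besselA_zero_right]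
  · exact Vnat_eq_zero Λ j.succ_pos

lemma Vnat_succ (Λ : ℕ → ℂ) (k j : ℕ) :
    Vnat Λ (k + 1) j = (Λ k + j) * Vnat Λ k j + if j = 0 then 0 else Vnat Λ k (j - 1) := by
  have hk : vSeries Λ (k + 1) j = vSeries Λ k j + X * (C (Λ k) * vSeries Λ k j) := by
    rw [vSeries, vSeries, sigmaSeries_succ]; ring
  simp only [Vnat]
  rw [hk, map_add, coeff_succ_X_mul, coeff_C_mul]
  rcases j with _ | j
  · have : coeff (k + 1) (vSeries Λ k 0) = 0 := by
      simp [vSeries, besselSeries_zero, sigmaSeries, sigmaE_eq_zero]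
    simp [this]
  · have hj : vSeries Λ k (j + 1) =
        X * (C ((j : ℂ) + 1) * vSeries Λ k (j + 1) + vSeries Λ k j) := by
      conv_lhs => rw [vSeries, besselSeries_succ]
      rw [vSeries, vSeries]; ring
    nth_rw 1 [hj]
    rw [coeff_succ_X_mul, map_add, coeff_C_mul]
    push_cast
    ring

lemma Ucoef'_eq_zero (Λ : ℕ → ℂ) {k j : ℕ} (h : k < j) : Ucoef' Λ k j = 0 := by
  induction k generalizing j with
  | zero => obtain ⟨j, rfl⟩ := Nat.exists_eq_add_of_lt h; rfl
  | succ k ih =>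
    obtain ⟨j, rfl⟩ := Nat.exists_eq_succ_of_ne_zero (by omega : j ≠ 0)
    rw [Ucoef', ih (by omega), ih (by omega), mul_zero, add_zero]

lemma Ucoef_eq_zero (Λ : ℕ → ℂ) {k j : ℕ} (h : k < j) : Ucoef Λ k j = 0 :=
  Ucoef'_eq_zero Λ (by omega)

lemma Ucoef_zero_left (Λ : ℕ → ℂ) (j : ℕ) : Ucoef Λ 0 j = if j = 0 then 1 else 0 := by
  rcases j with _ | j
  · simp [Ucoef, Ucoef']
  · exact Ucoef_eq_zero Λ j.succ_pos

lemma Ucoef_succ (Λ : ℕ → ℂ) (k j : ℕ) :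
    Ucoef Λ (k + 1) j = -(Λ j + k) * Ucoef Λ k j + if j = 0 then 0 else Ucoef Λ k (j - 1) := by
  simp only [Ucoef]
  rw [Ucoef']
  rcases j with _ | j
  · rw [if_pos rfl, Ucoef']; push_cast; ring
  · rw [if_neg j.succ_ne_zero, Nat.add_sub_cancel]; push_cast; ring

noncomputable def prodUV (Λ : ℕ → ℂ) (k j : ℕ) : ℂ :=
  ∑ l ∈ range (k + 1), Ucoef Λ k l * Vnat Λ l j

lemma prodUV_succ (Λ : ℕ → ℂ) (k j : ℕ) :
    prodUV Λ (k + 1) j = (j - k) * prodUV Λ k j + if j = 0 then 0 else prodUV Λ k (j - 1) := by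
  have hdrop : ∑ l ∈ range (k + 2), -(Λ l + k) * Ucoef Λ k l * Vnat Λ l j =
      ∑ l ∈ range (k + 1), -(Λ l + k) * Ucoef Λ k l * Vnat Λ l j := by
    rw [sum_range_succ, Ucoef_eq_zero Λ k.lt_add_one]; simp
  have hshift : ∑ l ∈ range (k + 2), (if l = 0 then 0 else Ucoef Λ k (l - 1)) * Vnat Λ l j =
      ∑ l ∈ range (k + 1), Ucoef Λ k l * Vnat Λ (l + 1) j := by
    rw [sum_range_succ']; simp
  calc prodUV Λ (k + 1) j
      = ∑ l ∈ range (k + 1),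
          (-(Λ l + k) * Ucoef Λ k l * Vnat Λ l j + Ucoef Λ k l * Vnat Λ (l + 1) j) := by
        simp only [prodUV, Ucoef_succ, add_mul, sum_add_distrib, hdrop, hshift]
    _ = ∑ l ∈ range (k + 1), ((j - k) * (Ucoef Λ k l * Vnat Λ l j) +
          Ucoef Λ k l * if j = 0 then 0 else Vnat Λ l (j - 1)) := by
        refine sum_congr rfl fun l _ => ?_
        rw [Vnat_succ]; ring
    _ = _ := by
        rw [sum_add_distrib, ← mul_sum]
        split_ifs <;> simp [prodUV]

lemma prodUV_eq (Λ : ℕ → ℂ) (k j : ℕ) : prodUV Λ k j = if k = j then 1 else 0 := by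
  induction k generalizing j with
  | zero => simp [prodUV, Ucoef_zero_left, Vnat_zero_left, eq_comm]
  | succ k ih =>
    rw [prodUV_succ, ih]
    rcases j with _ | j
    · simp
    · rw [ih]
      split_ifs <;> first | omega | simp_all

lemma sum_range_Ucoef_mul_Vnat (Λ : ℕ → ℂ) {N k : ℕ} (hk : k < N) (j : ℕ) :
    ∑ l ∈ range N, Ucoef Λ k l * Vnat Λ l j = if k = j then 1 else 0 := by
  rw [← prodUV_eq, prodUV]
  refine (sum_subset (range_subset_range.2 hk) fun l hl hl' => ?_).symm
  rw [Ucoef_eq_zero Λ (by simp_all), zero_mul]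

noncomputable def Umat (Λ : ℕ → ℂ) (N : ℕ) : Matrix (Fin N) (Fin N) ℂ :=
  Matrix.of fun a b => Ucoef Λ a b

noncomputable def Vmat (Λ : ℕ → ℂ) (N : ℕ) : Matrix (Fin N) (Fin N) ℂ :=
  Matrix.of fun a b => Vnat Λ a b

lemma Umat_mul_Vmat (Λ : ℕ → ℂ) (N : ℕ) : Umat Λ N * Vmat Λ N = 1 := by
  ext a b
  rw [Matrix.mul_apply, Matrix.one_apply]
  simp only [Umat, Vmat, Matrix.of_apply]
  rw [Fin.sum_univ_eq_sum_range (fun l => Ucoef Λ a l * Vnat Λ l b),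
    sum_range_Ucoef_mul_Vnat Λ a.isLt]
  simp only [Fin.val_inj]

lemma Vmat_mul_Umat (Λ : ℕ → ℂ) (N : ℕ) : Vmat Λ N * Umat Λ N = 1 :=
  mul_eq_one_comm.1 (Umat_mul_Vmat Λ N)

lemma sum_range_Vnat_mul_Ucoef (Λ : ℕ → ℂ) {N k j : ℕ} (hk : k < N) (hj : j < N) :
    ∑ l ∈ range N, Vnat Λ k l * Ucoef Λ l j = if k = j then 1 else 0 := by
  have h := congr_fun₂ (Vmat_mul_Umat Λ N) ⟨k, hk⟩ ⟨j, hj⟩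
  rw [Matrix.mul_apply, Matrix.one_apply] at h
  simpa [Umat, Vmat, Fin.sum_univ_eq_sum_range (fun l => Vnat Λ k l * Ucoef Λ l j)] using h

lemma sum_Icc_eq_sum_range {M : Type*} [AddCommMonoid M] {f : ℕ → M} {j : ℕ}
    (hf : ∀ l < j, f l = 0) (k : ℕ) : ∑ l ∈ Icc j k, f l = ∑ l ∈ range (k + 1), f l :=
  sum_subset (fun l hl => by simp at hl ⊢; omega) fun l _ hl => hf l (by simp at *; omega)

/-- The matrices `(U(k,j))` and `(V(k,j))` are mutually inverse:
`∑_{l=j}^k U(k,l)·V(l,j) = δ_{k,j}` and `∑_{l=j}^k V(k,l)·U(l,j) = δ_{k,j}`. -/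
theorem stmt_10 (Λ : ℕ → ℂ) (k j : ℕ) (hjk : j ≤ k) :
    (∑ l ∈ Finset.Icc j k, Ucoef Λ k l * Vcoef Λ l (j : ℤ)) =
      (if k = j then 1 else 0) ∧
    (∑ l ∈ Finset.Icc j k, Vcoef Λ k (l : ℤ) * Ucoef Λ l j) =
      (if k = j then 1 else 0) := by
  simp only [Vcoef_natCast]
  constructor
  · rw [sum_Icc_eq_sum_range (fun l hl => by rw [Vnat_eq_zero Λ hl, mul_zero])]
    exact sum_range_Ucoef_mul_Vnat Λ k.lt_add_one j
  · rw [sum_Icc_eq_sum_range (fun l hl => by rw [Ucoef_eq_zero Λ hl, mul_zero])]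
    exact sum_range_Vnat_mul_Ucoef Λ k.lt_add_one (by omega)
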